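/- Let P be the uniform probability measure on the chord {(x,−1/2) : −√3/2 ≤ x ≤ √3/2} of the unit circle in ℝ², and let the constraint be the unit circle. Then for every θ, the distortion error of P with respect to {(cos θ, sin θ)} equals sin θ + 3/2; consequently {(0,−1)} is the optimal set of one point, and the first constrained quantization error is V_1 = 1/2. -/

import Mathlib

open MeasureTheory Real Set

noncomputable section

abbrev E2 : Type := EuclideanSpace ℝ (Fin 2)

/-- The point `(x, y)` of the Euclidean plane. -/
def cpt (x y : ℝ) : E2 := WithLp.toLp 2 ![x, y]

/-- Distortion error of `P` with respect to the set `α`: `∫ min_{a ∈ α} ‖x - a‖² dP(x)`. -/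
def cDistortion (P : Measure E2) (α : Set E2) : ℝ :=
  ∫ x, (⨅ a : α, dist x (a : E2) ^ 2) ∂P

/-- The `n`th constrained quantization error of `P` with constraint set `S`. -/
def cqError (P : Measure E2) (S : Set E2) (n : ℕ) : ℝ :=
  sInf {v : ℝ | ∃ α : Set E2, α ⊆ S ∧ α.Finite ∧ 1 ≤ α.ncard ∧ α.ncard ≤ n ∧
    v = cDistortion P α}

/-- `α` is an optimal set of `n` points for `P` with constraint `S`: it is an admissible set
attaining the `n`th constrained quantization error. -/
def IsOptimalNSet (P : Measure E2) (S : Set E2) (n : ℕ) (α : Set E2) : Prop :=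
  α ⊆ S ∧ α.Finite ∧ 1 ≤ α.ncard ∧ α.ncard ≤ n ∧ cDistortion P α = cqError P S n

/-- The uniform probability distribution on the interval `[a, b]`. -/
def uniformIccM (a b : ℝ) : Measure ℝ :=
  (ENNReal.ofReal (b - a))⁻¹ • volume.restrict (Icc a b)

/-- The point of the line `y = m x + c` with abscissa `t`. -/
def segPt (m c t : ℝ) : E2 := cpt t (m * t + c)

/-! The distortion of a singleton `{a}` is the second moment of `P` about `a`, which splits as the
variance `1/4` of the uniform law on the chord plus the squared distance from its mean `(0, -1/2)`,
i.e. `1/4 + a₁² + (a₂ + 1/2)²`. On the unit circle `a₁² + a₂² = 1` this is `a₂ + 3/2`, smallest at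
the south pole `(0, -1)`. -/

section Uniform

variable {a b : ℝ}

lemma isProbabilityMeasure_uniformIccM (hab : a < b) :
    IsProbabilityMeasure (uniformIccM a b) := by
  constructor
  simp [uniformIccM, Real.volume_Icc, ENNReal.inv_mul_cancel,
    ENNReal.ofReal_eq_zero.not.mpr (not_le.mpr (sub_pos.mpr hab))]

lemma integral_uniformIccM (hab : a < b) (f : ℝ → ℝ) :
    ∫ t, f t ∂uniformIccM a b = (b - a)⁻¹ * ∫ t in a..b, f t := by
  rw [uniformIccM, integral_smul_measure, integral_Icc_eq_integral_Ioc,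
    ← intervalIntegral.integral_of_le hab.le, ENNReal.toReal_inv,
    ENNReal.toReal_ofReal (sub_pos.mpr hab).le, smul_eq_mul]

lemma _root_.Continuous.integrable_uniformIccM {f : ℝ → ℝ} (hf : Continuous f) (hab : a < b) :
    Integrable f (uniformIccM a b) :=
  Integrable.smul_measure hf.integrableOn_Icc (by simpa using hab)

/-- Bias–variance decomposition of the second moment about `c`. -/
lemma integral_sub_sq_uniformIccM (hab : a < b) (c : ℝ) :
    ∫ t, (t - c) ^ 2 ∂uniformIccM a b = (b - a) ^ 2 / 12 + ((a + b) / 2 - c) ^ 2 := by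
  rw [integral_uniformIccM hab, intervalIntegral.integral_comp_sub_right (fun t => t ^ 2),
    integral_pow]
  field_simp [(sub_pos.mpr hab).ne']
  ring

end Uniform

lemma continuous_cpt_left (y : ℝ) : Continuous fun x : ℝ => cpt x y := by
  unfold cpt
  fun_prop

lemma dist_cpt_sq (x y : ℝ) (p : E2) : dist (cpt x y) p ^ 2 = (x - p 0) ^ 2 + (y - p 1) ^ 2 := by
  rw [EuclideanSpace.dist_eq, Real.sq_sqrt (by positivity)]
  simp [Fin.sum_univ_two, cpt, Real.dist_eq, sq_abs]

lemma cDistortion_singleton (P : Measure E2) (p : E2) :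
    cDistortion P {p} = ∫ x, dist x p ^ 2 ∂P := by
  simp only [cDistortion, ciInf_unique, Set.default_coe_singleton]

lemma cDistortion_map_cpt_uniformIccM_singleton {a b : ℝ} (hab : a < b) (y : ℝ) (p : E2) :
    cDistortion (Measure.map (fun x => cpt x y) (uniformIccM a b)) {p} =
      (b - a) ^ 2 / 12 + ((a + b) / 2 - p 0) ^ 2 + (y - p 1) ^ 2 := by
  have := isProbabilityMeasure_uniformIccM hab
  rw [cDistortion_singleton, integral_map (continuous_cpt_left y).aemeasurable
    (by fun_prop : Continuous fun x : E2 => dist x p ^ 2).aestronglyMeasurable]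
  have hint : Integrable (fun t : ℝ => (t - p 0) ^ 2) (uniformIccM a b) :=
    (by fun_prop : Continuous fun t : ℝ => (t - p 0) ^ 2).integrable_uniformIccM hab
  simp only [dist_cpt_sq]
  rw [integral_add hint (integrable_const _), integral_const, integral_sub_sq_uniformIccM hab]
  simp

lemma sq_add_sq_of_mem_unitSphere {p : E2} (hp : p ∈ Metric.sphere (0 : E2) 1) :
    p 0 ^ 2 + p 1 ^ 2 = 1 := by
  have h := EuclideanSpace.real_norm_sq_eq p
  rw [mem_sphere_zero_iff_norm.mp hp, Fin.sum_univ_two] at h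
  linarith

lemma cpt_mem_unitSphere_iff (x y : ℝ) :
    cpt x y ∈ Metric.sphere (0 : E2) 1 ↔ x ^ 2 + y ^ 2 = 1 := by
  rw [mem_sphere_zero_iff_norm, ← pow_eq_one_iff_of_nonneg (norm_nonneg _) two_ne_zero,
    EuclideanSpace.real_norm_sq_eq]
  simp [Fin.sum_univ_two, cpt]

lemma isOptimalNSet_one_of_isMinOn {P : Measure E2} {S : Set E2} {p : E2} (hp : p ∈ S)
    (hmin : IsMinOn (fun q => cDistortion P {q}) S p) :
    IsOptimalNSet P S 1 {p} := by
  have hleast : IsLeast {v : ℝ | ∃ α : Set E2, α ⊆ S ∧ α.Finite ∧ 1 ≤ α.ncard ∧ α.ncard ≤ 1 ∧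
      v = cDistortion P α} (cDistortion P {p}) := by
    refine ⟨⟨{p}, Set.singleton_subset_iff.mpr hp, Set.finite_singleton p, by simp, by simp, rfl⟩,
      ?_⟩
    rintro v ⟨α, hαS, -, h1, h2, rfl⟩
    obtain ⟨q, rfl⟩ := Set.ncard_eq_one.mp (le_antisymm h2 h1)
    exact isMinOn_iff.mp hmin q (hαS rfl)
  exact ⟨Set.singleton_subset_iff.mpr hp, Set.finite_singleton p, by simp, by simp,
    hleast.csInf_eq.symm⟩

local notation "chordP" => Measure.map (fun x : ℝ => cpt x (-(1/2)))
  (uniformIccM (-(Real.sqrt 3 / 2)) (Real.sqrt 3 / 2))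

lemma cDistortion_chord_singleton_of_mem_unitSphere {p : E2} (hp : p ∈ Metric.sphere (0 : E2) 1) :
    cDistortion chordP {p} = p 1 + 3 / 2 := by
  have h3 : Real.sqrt 3 ^ 2 = 3 := Real.sq_sqrt (by norm_num)
  rw [cDistortion_map_cpt_uniformIccM_singleton (by simp)]
  nlinarith [sq_add_sq_of_mem_unitSphere hp]

/-- For the uniform distribution on the chord `{(x, -1/2) : -√3/2 ≤ x ≤ √3/2}` of the unit
circle, with constraint the unit circle: for every `θ` the distortion error of
`{(cos θ, sin θ)}` equals `sin θ + 3/2`; consequently `{(0, -1)}` is an optimal set of one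
point, and the first constrained quantization error is `V₁ = 1/2`. -/
theorem chord_circle_constraint_one_point :
    (∀ θ : ℝ,
      cDistortion
        (Measure.map (fun x : ℝ => cpt x (-(1/2)))
          (uniformIccM (-(Real.sqrt 3 / 2)) (Real.sqrt 3 / 2)))
        {cpt (Real.cos θ) (Real.sin θ)} = Real.sin θ + 3 / 2) ∧
    IsOptimalNSet
      (Measure.map (fun x : ℝ => cpt x (-(1/2)))
        (uniformIccM (-(Real.sqrt 3 / 2)) (Real.sqrt 3 / 2)))
      (Metric.sphere (0 : E2) 1) 1 {cpt 0 (-1)} ∧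
    cqError
      (Measure.map (fun x : ℝ => cpt x (-(1/2)))
        (uniformIccM (-(Real.sqrt 3 / 2)) (Real.sqrt 3 / 2)))
      (Metric.sphere (0 : E2) 1) 1 = 1 / 2 := by
  have hsouth : cpt 0 (-1) ∈ Metric.sphere (0 : E2) 1 := by
    rw [cpt_mem_unitSphere_iff]; norm_num
  have hvalue : cDistortion chordP {cpt 0 (-1)} = 1 / 2 := by
    rw [cDistortion_chord_singleton_of_mem_unitSphere hsouth]; norm_num [cpt]
  have hopt : IsOptimalNSet chordP (Metric.sphere (0 : E2) 1) 1 {cpt 0 (-1)} := by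
    refine isOptimalNSet_one_of_isMinOn hsouth (isMinOn_iff.mpr fun q hq => ?_)
    rw [hvalue, cDistortion_chord_singleton_of_mem_unitSphere hq]
    nlinarith [sq_add_sq_of_mem_unitSphere hq, sq_nonneg (q 0), sq_nonneg (q 1 + 1)]
  refine ⟨fun θ => ?_, hopt, hopt.2.2.2.2.symm.trans hvalue⟩
  rw [cDistortion_chord_singleton_of_mem_unitSphere ((cpt_mem_unitSphere_iff _ _).mpr (by simp))]
  simp [cpt]
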